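/- Each of the five-dimensional nilpotent real Lie algebras L_{5,1} (abelian), L_{5,2} (nonzero bracket [e1,e2]=e3), L_{5,8} (nonzero brackets [e1,e2]=e4, [e1,e3]=e5) and L_{5,9} (nonzero brackets [e1,e2]=e3, [e1,e3]=e4, [e2,e3]=e5) has center of dimension at least 2, and consequently admits no contact form. -/

import Mathlib

set_option linter.unnecessarySeqFocus false

noncomputable section

/-- The wedge product of two scalar-valued alternating forms. -/
def wedge {R M : Type*} [CommRing R] [AddCommGroup M] [Module R M] {m n : ℕ}
    (α : M [⋀^Fin m]→ₗ[R] R) (β : M [⋀^Fin n]→ₗ[R] R) : M [⋀^Fin (m + n)]→ₗ[R] R :=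
  (LinearMap.mul' R R).compAlternatingMap ((α.domCoprod β).domDomCongr finSumFinEquiv)

/-- Reindexing of an alternating form along an equality of degrees. -/
def castForm {R M : Type*} [CommRing R] [AddCommGroup M] [Module R M] {m n : ℕ}
    (h : m = n) (α : M [⋀^Fin m]→ₗ[R] R) : M [⋀^Fin n]→ₗ[R] R :=
  α.domDomCongr (finCongr h)

/-- A linear functional, viewed as a `1`-form. -/
def oneForm {R M : Type*} [CommRing R] [AddCommGroup M] [Module R M]
    (f : M →ₗ[R] R) : M [⋀^Fin 1]→ₗ[R] R :=
  AlternatingMap.ofSubsingleton R M R 0 f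


/-- The underlying vector space of the 5-dimensional nilpotent Lie algebra `L51`. -/
def L51 : Type := Fin 5 → ℝ

instance : AddCommGroup L51 := inferInstanceAs (AddCommGroup (Fin 5 → ℝ))
instance : Module ℝ L51 := inferInstanceAs (Module ℝ (Fin 5 → ℝ))

theorem L51.add_apply (x y : L51) (i : Fin 5) : (x + y) i = x i + y i := rfl
theorem L51.smul_apply (t : ℝ) (x : L51) (i : Fin 5) : (t • x) i = t * x i := rfl

/-- The bracket of `L51`: the abelian Lie algebra. -/
def L51.b (x y : Fin 5 → ℝ) : Fin 5 → ℝ := ![0, 0, 0, 0, 0]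

instance : LieRing L51 where
  bracket x y := L51.b x y
  add_lie x y z := by
    show L51.b (x + y) z = L51.b x z + L51.b y z
    funext i; fin_cases i <;> simp [L51.b, L51.add_apply] <;> ring
  lie_add x y z := by
    show L51.b x (y + z) = L51.b x y + L51.b x z
    funext i; fin_cases i <;> simp [L51.b, L51.add_apply] <;> ring
  lie_self x := by
    show L51.b x x = 0
    funext i; fin_cases i <;> simp [L51.b] <;> ring
  leibniz_lie x y z := by
    show L51.b x (L51.b y z) = L51.b (L51.b x y) z + L51.b y (L51.b x z)
    funext i; fin_cases i <;> simp [L51.b, L51.add_apply] <;> ring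

instance : LieAlgebra ℝ L51 where
  lie_smul t x y := by
    show L51.b x (t • y) = t • L51.b x y
    funext i; fin_cases i <;> simp [L51.b, L51.smul_apply] <;> ring

/-- The standard basis `e1, …, e5` of `L51` (indexed by `0, …, 4`). -/
def L51.e (i : Fin 5) : L51 := (Pi.single i 1 : Fin 5 → ℝ)

/-- The dual basis `e^1, …, e^5` of `L51` (indexed by `0, …, 4`). -/
def L51.eps (i : Fin 5) : Module.Dual ℝ L51 where
  toFun x := x i
  map_add' _ _ := rfl
  map_smul' _ _ := rfl

/-- The underlying vector space of the 5-dimensional nilpotent Lie algebra `L52`. -/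
def L52 : Type := Fin 5 → ℝ

instance : AddCommGroup L52 := inferInstanceAs (AddCommGroup (Fin 5 → ℝ))
instance : Module ℝ L52 := inferInstanceAs (Module ℝ (Fin 5 → ℝ))

theorem L52.add_apply (x y : L52) (i : Fin 5) : (x + y) i = x i + y i := rfl
theorem L52.smul_apply (t : ℝ) (x : L52) (i : Fin 5) : (t • x) i = t * x i := rfl

/-- The bracket of `L52`: `[e1,e2] = e3`. -/
def L52.b (x y : Fin 5 → ℝ) : Fin 5 → ℝ := ![0, 0, x 0 * y 1 - x 1 * y 0, 0, 0]

instance : LieRing L52 where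
  bracket x y := L52.b x y
  add_lie x y z := by
    show L52.b (x + y) z = L52.b x z + L52.b y z
    funext i; fin_cases i <;> simp [L52.b, L52.add_apply] <;> ring
  lie_add x y z := by
    show L52.b x (y + z) = L52.b x y + L52.b x z
    funext i; fin_cases i <;> simp [L52.b, L52.add_apply] <;> ring
  lie_self x := by
    show L52.b x x = 0
    funext i; fin_cases i <;> simp [L52.b] <;> ring
  leibniz_lie x y z := by
    show L52.b x (L52.b y z) = L52.b (L52.b x y) z + L52.b y (L52.b x z)
    funext i; fin_cases i <;> simp [L52.b, L52.add_apply] <;> ring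

instance : LieAlgebra ℝ L52 where
  lie_smul t x y := by
    show L52.b x (t • y) = t • L52.b x y
    funext i; fin_cases i <;> simp [L52.b, L52.smul_apply] <;> ring

/-- The standard basis `e1, …, e5` of `L52` (indexed by `0, …, 4`). -/
def L52.e (i : Fin 5) : L52 := (Pi.single i 1 : Fin 5 → ℝ)

/-- The dual basis `e^1, …, e^5` of `L52` (indexed by `0, …, 4`). -/
def L52.eps (i : Fin 5) : Module.Dual ℝ L52 where
  toFun x := x i
  map_add' _ _ := rfl
  map_smul' _ _ := rfl

/-- The underlying vector space of the 5-dimensional nilpotent Lie algebra `L58`. -/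
def L58 : Type := Fin 5 → ℝ

instance : AddCommGroup L58 := inferInstanceAs (AddCommGroup (Fin 5 → ℝ))
instance : Module ℝ L58 := inferInstanceAs (Module ℝ (Fin 5 → ℝ))

theorem L58.add_apply (x y : L58) (i : Fin 5) : (x + y) i = x i + y i := rfl
theorem L58.smul_apply (t : ℝ) (x : L58) (i : Fin 5) : (t • x) i = t * x i := rfl

/-- The bracket of `L58`: `[e1,e2] = e4`, `[e1,e3] = e5`. -/
def L58.b (x y : Fin 5 → ℝ) : Fin 5 → ℝ := ![0, 0, 0, x 0 * y 1 - x 1 * y 0, x 0 * y 2 - x 2 * y 0]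

instance : LieRing L58 where
  bracket x y := L58.b x y
  add_lie x y z := by
    show L58.b (x + y) z = L58.b x z + L58.b y z
    funext i; fin_cases i <;> simp [L58.b, L58.add_apply] <;> ring
  lie_add x y z := by
    show L58.b x (y + z) = L58.b x y + L58.b x z
    funext i; fin_cases i <;> simp [L58.b, L58.add_apply] <;> ring
  lie_self x := by
    show L58.b x x = 0
    funext i; fin_cases i <;> simp [L58.b] <;> ring
  leibniz_lie x y z := by
    show L58.b x (L58.b y z) = L58.b (L58.b x y) z + L58.b y (L58.b x z)
    funext i; fin_cases i <;> simp [L58.b, L58.add_apply] <;> ring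

instance : LieAlgebra ℝ L58 where
  lie_smul t x y := by
    show L58.b x (t • y) = t • L58.b x y
    funext i; fin_cases i <;> simp [L58.b, L58.smul_apply] <;> ring

/-- The standard basis `e1, …, e5` of `L58` (indexed by `0, …, 4`). -/
def L58.e (i : Fin 5) : L58 := (Pi.single i 1 : Fin 5 → ℝ)

/-- The dual basis `e^1, …, e^5` of `L58` (indexed by `0, …, 4`). -/
def L58.eps (i : Fin 5) : Module.Dual ℝ L58 where
  toFun x := x i
  map_add' _ _ := rfl
  map_smul' _ _ := rfl

/-- The underlying vector space of the 5-dimensional nilpotent Lie algebra `L59`. -/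
def L59 : Type := Fin 5 → ℝ

instance : AddCommGroup L59 := inferInstanceAs (AddCommGroup (Fin 5 → ℝ))
instance : Module ℝ L59 := inferInstanceAs (Module ℝ (Fin 5 → ℝ))

theorem L59.add_apply (x y : L59) (i : Fin 5) : (x + y) i = x i + y i := rfl
theorem L59.smul_apply (t : ℝ) (x : L59) (i : Fin 5) : (t • x) i = t * x i := rfl

/-- The bracket of `L59`: `[e1,e2] = e3`, `[e1,e3] = e4`, `[e2,e3] = e5`. -/
def L59.b (x y : Fin 5 → ℝ) : Fin 5 → ℝ := ![0, 0, x 0 * y 1 - x 1 * y 0, x 0 * y 2 - x 2 * y 0, x 1 * y 2 - x 2 * y 1]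

instance : LieRing L59 where
  bracket x y := L59.b x y
  add_lie x y z := by
    show L59.b (x + y) z = L59.b x z + L59.b y z
    funext i; fin_cases i <;> simp [L59.b, L59.add_apply] <;> ring
  lie_add x y z := by
    show L59.b x (y + z) = L59.b x y + L59.b x z
    funext i; fin_cases i <;> simp [L59.b, L59.add_apply] <;> ring
  lie_self x := by
    show L59.b x x = 0
    funext i; fin_cases i <;> simp [L59.b] <;> ring
  leibniz_lie x y z := by
    show L59.b x (L59.b y z) = L59.b (L59.b x y) z + L59.b y (L59.b x z)
    funext i; fin_cases i <;> simp [L59.b, L59.add_apply] <;> ring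

instance : LieAlgebra ℝ L59 where
  lie_smul t x y := by
    show L59.b x (t • y) = t • L59.b x y
    funext i; fin_cases i <;> simp [L59.b, L59.smul_apply] <;> ring

/-- The standard basis `e1, …, e5` of `L59` (indexed by `0, …, 4`). -/
def L59.e (i : Fin 5) : L59 := (Pi.single i 1 : Fin 5 → ℝ)

/-- The dual basis `e^1, …, e^5` of `L59` (indexed by `0, …, 4`). -/
def L59.eps (i : Fin 5) : Module.Dual ℝ L59 where
  toFun x := x i
  map_add' _ _ := rfl
  map_smul' _ _ := rfl


/-!
For a `1`-form `Θ`, `δΘ (x, y) = -Θ ⁅x, y⁆` vanishes as soon as one argument is central, and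
hence so does `δΘ ∧ δΘ`. Evaluate `Θ ∧ δΘ ∧ δΘ` on a basis containing two central vectors: in
every term of the shuffle sum `Θ` takes only one argument, so a central vector reaches
`δΘ ∧ δΘ` and the term vanishes. In each of the four algebras `e4` and `e5` are central, which
gives both the bound on the center and the absence of a contact form.
-/

section Wedge

open AlternatingMap

variable {R M : Type*} [CommRing R] [AddCommGroup M] [Module R M]

def AlternatingMap.InKernel {ι : Type*} (ω : M [⋀^ι]→ₗ[R] R) (z : M) : Prop :=
  ∀ (v : ι → M) (i : ι), v i = z → ω v = 0

variable {m n : ℕ}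

theorem wedge_apply_eq_zero_of_forall_perm (α : M [⋀^Fin m]→ₗ[R] R) (β : M [⋀^Fin n]→ₗ[R] R)
    (v : Fin (m + n) → M)
    (h : ∀ s : Equiv.Perm (Fin m ⊕ Fin n),
      α (fun i => v (finSumFinEquiv (s (.inl i)))) = 0 ∨
      β (fun i => v (finSumFinEquiv (s (.inr i)))) = 0) :
    wedge α β v = 0 := by
  change LinearMap.mul' R R ((α.domCoprod β).domDomCongr finSumFinEquiv v) = 0
  rw [domDomCongr_apply, domCoprod_apply, sum_apply, map_sum]
  refine Finset.sum_eq_zero fun σ _ => ?_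
  induction σ using Quotient.inductionOn with
  | h s =>
    rw [domCoprod.summand_mk'']
    rcases h s with h0 | h0 <;>
    · simp only [_root_.smul_apply, MultilinearMap.domDomCongr_apply,
        MultilinearMap.domCoprod_apply, coe_multilinearMap, Function.comp_def, h0]
      simp

theorem AlternatingMap.InKernel.wedge {α : M [⋀^Fin m]→ₗ[R] R} {β : M [⋀^Fin n]→ₗ[R] R} {z : M}
    (hα : α.InKernel z) (hβ : β.InKernel z) : (wedge α β).InKernel z := by
  intro v j hj
  refine wedge_apply_eq_zero_of_forall_perm α β v fun s => ?_
  have hs : ∀ k, s.symm (finSumFinEquiv.symm j) = k → v (finSumFinEquiv (s k)) = z := by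
    rintro k rfl
    simpa using hj
  rcases hk : s.symm (finSumFinEquiv.symm j) with k | k
  · exact .inl (hα _ k (hs _ hk))
  · exact .inr (hβ _ k (hs _ hk))

/-- `α` has only `m` slots, so one of the `m + 1` kernel vectors of `β` always lands in `β`. -/
theorem wedge_apply_eq_zero_of_inKernel_right (α : M [⋀^Fin m]→ₗ[R] R)
    {β : M [⋀^Fin n]→ₗ[R] R} (v : Fin (m + n) → M) {f : Fin (m + 1) → Fin (m + n)}
    (hf : Function.Injective f) (hβ : ∀ i, β.InKernel (v (f i))) :
    wedge α β v = 0 := by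
  refine wedge_apply_eq_zero_of_forall_perm α β v fun s => .inr ?_
  set g := fun i => s.symm (finSumFinEquiv.symm (f i))
  have hg : Function.Injective g := fun i j h => hf (by simpa [g] using h)
  obtain ⟨i, k, hk⟩ : ∃ i k, g i = .inr k := by
    by_contra! hleft
    have hmaps : Set.MapsTo g (Finset.univ : Finset (Fin (m + 1)))
        (Finset.univ.map .inl : Finset (Fin m ⊕ Fin n)) := fun i _ => by
      cases hgi : g i with
      | inl k => simp
      | inr k => exact absurd hgi (hleft i k)
    simpa using Finset.card_le_card_of_injOn g hmaps hg.injOn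
  exact hβ i _ k (by simp [← hk, g])

end Wedge

section ContactForm

variable {R L : Type*} [CommRing R] [LieRing L] [LieAlgebra R L]

theorem inKernel_of_mem_center {δ : Module.Dual R L → L [⋀^Fin 2]→ₗ[R] R}
    (hδ : ∀ (α : Module.Dual R L) (x y : L), δ α ![x, y] = -α ⁅x, y⁆) (α : Module.Dual R L)
    {z : L} (hz : z ∈ LieAlgebra.center R L) : (δ α).InKernel z := by
  intro v i hi
  have hv : v = ![v 0, v 1] := by
    ext k; fin_cases k <;> rfl
  have hbracket : ⁅v 0, v 1⁆ = 0 := by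
    rw [LieModule.mem_maxTrivSubmodule] at hz
    fin_cases i
    · rw [← lie_skew, neg_eq_zero]
      exact hi ▸ hz (v 1)
    · exact hi ▸ hz (v 0)
  rw [hv, hδ, hbracket, _root_.map_zero, neg_zero]

theorem wedge_oneForm_wedge_eq_zero_of_basis_mem_center (b : Module.Basis (Fin 5) R L)
    {p q : Fin 5} (hpq : p ≠ q) (hp : b p ∈ LieAlgebra.center R L)
    (hq : b q ∈ LieAlgebra.center R L) {δ : Module.Dual R L → L [⋀^Fin 2]→ₗ[R] R}
    (hδ : ∀ (α : Module.Dual R L) (x y : L), δ α ![x, y] = -α ⁅x, y⁆) (Θ : Module.Dual R L) :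
    wedge (oneForm Θ) (wedge (δ Θ) (δ Θ)) = 0 := by
  have hker : ∀ z ∈ LieAlgebra.center R L, (wedge (δ Θ) (δ Θ)).InKernel z := fun z hz =>
    (inKernel_of_mem_center hδ Θ hz).wedge (inKernel_of_mem_center hδ Θ hz)
  refine b.ext_alternating fun v hv => ?_
  obtain ⟨i, rfl⟩ := Finite.injective_iff_surjective.mp hv p
  obtain ⟨j, rfl⟩ := Finite.injective_iff_surjective.mp hv q
  refine wedge_apply_eq_zero_of_inKernel_right _ _ (f := ![i, j])
    (injective_pair_iff_ne.mpr (ne_of_apply_ne v hpq)) fun k => ?_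
  fin_cases k
  exacts [hker _ hp, hker _ hq]

end ContactForm

theorem two_le_finrank_center_of_basis_mem_center {K L ι : Type*} [Field K] [LieRing L]
    [LieAlgebra K L] [Finite ι] (b : Module.Basis ι K L) {p q : ι} (hpq : p ≠ q)
    (hp : b p ∈ LieAlgebra.center K L) (hq : b q ∈ LieAlgebra.center K L) :
    2 ≤ Module.finrank K (LieAlgebra.center K L) := by
  have : Module.Finite K L := .of_basis b
  have hli : LinearIndependent K ![(⟨b p, hp⟩ : LieAlgebra.center K L), ⟨b q, hq⟩] := by
    refine .of_comp (LieAlgebra.center K L).toSubmodule.subtype ?_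
    convert b.linearIndependent.comp ![p, q] (injective_pair_iff_ne.mpr hpq) using 1
    ext k; fin_cases k <;> rfl
  simpa using hli.fintype_card_le_finrank

theorem two_le_finrank_center_and_not_exists_contact {K L : Type*} [Field K] [LieRing L]
    [LieAlgebra K L] (b : Module.Basis (Fin 5) K L) {p q : Fin 5} (hpq : p ≠ q)
    (hp : b p ∈ LieAlgebra.center K L) (hq : b q ∈ LieAlgebra.center K L)
    {δ : Module.Dual K L → L [⋀^Fin 2]→ₗ[K] K}
    (hδ : ∀ (α : Module.Dual K L) (x y : L), δ α ![x, y] = -α ⁅x, y⁆) :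
    2 ≤ Module.finrank K (LieAlgebra.center K L) ∧
      ¬ ∃ Θ : Module.Dual K L, wedge (oneForm Θ) (wedge (δ Θ) (δ Θ)) ≠ 0 :=
  ⟨two_le_finrank_center_of_basis_mem_center b hpq hp hq,
    fun ⟨Θ, hΘ⟩ => hΘ (wedge_oneForm_wedge_eq_zero_of_basis_mem_center b hpq hp hq hδ Θ)⟩

theorem L51.basisFun_mem_center {i : Fin 5} (hi : i = 3 ∨ i = 4) :
    (Pi.basisFun ℝ (Fin 5) : Module.Basis (Fin 5) ℝ L51) i ∈ LieAlgebra.center ℝ L51 := by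
  refine (LieModule.mem_maxTrivSubmodule ℝ L51 L51 _).mpr fun x => ?_
  rw [Pi.basisFun_apply]
  change L51.b x (Pi.single i 1) = 0
  rcases hi with rfl | rfl <;> funext j <;> fin_cases j <;> simp [L51.b]

theorem L52.basisFun_mem_center {i : Fin 5} (hi : i = 3 ∨ i = 4) :
    (Pi.basisFun ℝ (Fin 5) : Module.Basis (Fin 5) ℝ L52) i ∈ LieAlgebra.center ℝ L52 := by
  refine (LieModule.mem_maxTrivSubmodule ℝ L52 L52 _).mpr fun x => ?_
  rw [Pi.basisFun_apply]
  change L52.b x (Pi.single i 1) = 0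
  rcases hi with rfl | rfl <;> funext j <;> fin_cases j <;> simp [L52.b]

theorem L58.basisFun_mem_center {i : Fin 5} (hi : i = 3 ∨ i = 4) :
    (Pi.basisFun ℝ (Fin 5) : Module.Basis (Fin 5) ℝ L58) i ∈ LieAlgebra.center ℝ L58 := by
  refine (LieModule.mem_maxTrivSubmodule ℝ L58 L58 _).mpr fun x => ?_
  rw [Pi.basisFun_apply]
  change L58.b x (Pi.single i 1) = 0
  rcases hi with rfl | rfl <;> funext j <;> fin_cases j <;> simp [L58.b]

theorem L59.basisFun_mem_center {i : Fin 5} (hi : i = 3 ∨ i = 4) :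
    (Pi.basisFun ℝ (Fin 5) : Module.Basis (Fin 5) ℝ L59) i ∈ LieAlgebra.center ℝ L59 := by
  refine (LieModule.mem_maxTrivSubmodule ℝ L59 L59 _).mpr fun x => ?_
  rw [Pi.basisFun_apply]
  change L59.b x (Pi.single i 1) = 0
  rcases hi with rfl | rfl <;> funext j <;> fin_cases j <;> simp [L59.b]

/-- Each of the five-dimensional nilpotent real Lie algebras `L_{5,1}`
(abelian), `L_{5,2}` (`[e1,e2]=e3`), `L_{5,8}` (`[e1,e2]=e4`, `[e1,e3]=e5`) and
`L_{5,9}` (`[e1,e2]=e3`, `[e1,e3]=e4`, `[e2,e3]=e5`) has center of dimension at least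
`2`, and consequently admits no contact form `Θ` with `Θ ∧ δΘ ∧ δΘ ≠ 0`. Here `δ` is
the Chevalley–Eilenberg differential, determined on `1`-forms by `(δα)(x,y) = −α([x,y])`. -/
theorem L51_L52_L58_L59_center_ge_two_and_no_contact
    (δ₁ : Module.Dual ℝ L51 → (L51 [⋀^Fin 2]→ₗ[ℝ] ℝ))
    (hδ₁ : ∀ (α : Module.Dual ℝ L51) (x y : L51), δ₁ α ![x, y] = -α ⁅x, y⁆)
    (δ₂ : Module.Dual ℝ L52 → (L52 [⋀^Fin 2]→ₗ[ℝ] ℝ))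
    (hδ₂ : ∀ (α : Module.Dual ℝ L52) (x y : L52), δ₂ α ![x, y] = -α ⁅x, y⁆)
    (δ₈ : Module.Dual ℝ L58 → (L58 [⋀^Fin 2]→ₗ[ℝ] ℝ))
    (hδ₈ : ∀ (α : Module.Dual ℝ L58) (x y : L58), δ₈ α ![x, y] = -α ⁅x, y⁆)
    (δ₉ : Module.Dual ℝ L59 → (L59 [⋀^Fin 2]→ₗ[ℝ] ℝ))
    (hδ₉ : ∀ (α : Module.Dual ℝ L59) (x y : L59), δ₉ α ![x, y] = -α ⁅x, y⁆) :
    (2 ≤ Module.finrank ℝ ↥(LieAlgebra.center ℝ L51) ∧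
      ¬ ∃ Θ : Module.Dual ℝ L51, wedge (oneForm Θ) (wedge (δ₁ Θ) (δ₁ Θ)) ≠ 0) ∧
    (2 ≤ Module.finrank ℝ ↥(LieAlgebra.center ℝ L52) ∧
      ¬ ∃ Θ : Module.Dual ℝ L52, wedge (oneForm Θ) (wedge (δ₂ Θ) (δ₂ Θ)) ≠ 0) ∧
    (2 ≤ Module.finrank ℝ ↥(LieAlgebra.center ℝ L58) ∧
      ¬ ∃ Θ : Module.Dual ℝ L58, wedge (oneForm Θ) (wedge (δ₈ Θ) (δ₈ Θ)) ≠ 0) ∧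
    (2 ≤ Module.finrank ℝ ↥(LieAlgebra.center ℝ L59) ∧
      ¬ ∃ Θ : Module.Dual ℝ L59, wedge (oneForm Θ) (wedge (δ₉ Θ) (δ₉ Θ)) ≠ 0) := by
  have h34 : (3 : Fin 5) ≠ 4 := by decide
  exact ⟨two_le_finrank_center_and_not_exists_contact (L := L51) _ h34
      (L51.basisFun_mem_center (.inl rfl)) (L51.basisFun_mem_center (.inr rfl)) hδ₁,
    two_le_finrank_center_and_not_exists_contact (L := L52) _ h34
      (L52.basisFun_mem_center (.inl rfl)) (L52.basisFun_mem_center (.inr rfl)) hδ₂,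
    two_le_finrank_center_and_not_exists_contact (L := L58) _ h34
      (L58.basisFun_mem_center (.inl rfl)) (L58.basisFun_mem_center (.inr rfl)) hδ₈,
    two_le_finrank_center_and_not_exists_contact (L := L59) _ h34
      (L59.basisFun_mem_center (.inl rfl)) (L59.basisFun_mem_center (.inr rfl)) hδ₉⟩

end
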